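/- The 𝔤-module W is faithful if and only if the Fock representation is faithful; explicitly: (for all x ∈ 𝔤, if x·w = 0 for every w ∈ W then x = 0) holds if and only if (for all x ∈ 𝔤 and k ∈ K, if f_x = k·id_P then x = 0 and k = 0) holds. -/

import Mathlib

open scoped Classical

/-- Multiplication by the variable `X γ` on the bosonic Fock space `K[X_α : α ∈ I]`. -/
noncomputable def Mop (K : Type*) [CommSemiring K] {I : Type*} (γ : I) :
    Module.End K (MvPolynomial I K) :=
  LinearMap.mulLeft K (MvPolynomial.X γ)

/-- The partial derivative `∂/∂X_α` on the bosonic Fock space `K[X_α : α ∈ I]`. -/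
noncomputable def Dop (K : Type*) [CommSemiring K] {I : Type*} (α : I) :
    Module.End K (MvPolynomial I K) :=
  (MvPolynomial.pderiv α).toLinearMap

/-- The normally ordered quadratic piece `N(γ,α)`. -/
noncomputable def Nop (K : Type*) [CommSemiring K] {I : Type*} (J : Set I) (γ α : I) :
    Module.End K (MvPolynomial I K) :=
  if γ = α ∧ α ∈ J then Dop K α ∘ₗ Mop K α else Mop K γ ∘ₗ Dop K α

/-- The normally ordered quadratic operator
`f_x = Σ_{α,γ∈I} x_γ^α N(γ,α)` on bosonic Fock space, where
`x_γ^α = (b.repr ⁅x, b α⁆) γ` are the matrix coefficients of `x` on `W`. -/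
noncomputable def fock {K : Type*} [Field K] {L : Type*} [LieRing L] [LieAlgebra K L]
    {W : Type*} [AddCommGroup W] [Module K W] [LieRingModule L W] [LieModule K L W]
    {I : Type*} [Fintype I] (b : Module.Basis I K W) (J : Set I) (x : L) :
    Module.End K (MvPolynomial I K) :=
  ∑ α : I, ∑ γ : I, b.repr ⁅x, b α⁆ γ • Nop K J γ α

/-!
By the commutation relation `∂_α X_α = X_α ∂_α + 1`, the operator `f_x` is
`Σ x_γ^α X_γ ∂_α` plus the scalar `Σ_{α ∈ J} x_α^α`. The first part kills `1` and maps `X_β`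
to the image of `x · e_β` under `e_γ ↦ X_γ`. Hence `f_x = k · id` forces the scalar to be `k`
(evaluate at `1`) and then `x · e_β = 0` for every `β` (evaluate at `X_β`), while `k = 0` once
`x` acts trivially, because then `f_x = 0`.
-/

open MvPolynomial

section CCR

variable {K : Type*} [CommSemiring K] {I : Type*}

theorem Dop_comp_Mop_self (α : I) :
    Dop K α ∘ₗ Mop K α = Mop K α ∘ₗ Dop K α + 1 := by
  refine LinearMap.ext fun p => ?_
  simp [Dop, Mop, add_comm]

theorem Nop_eq (J : Set I) (γ α : I) :
    Nop K J γ α = Mop K γ ∘ₗ Dop K α + if γ = α ∧ α ∈ J then 1 else 0 := by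
  unfold Nop
  split_ifs with h
  · rw [h.1, Dop_comp_Mop_self]
  · rw [add_zero]

theorem Mop_comp_Dop_apply_one (γ α : I) :
    (Mop K γ ∘ₗ Dop K α) (1 : MvPolynomial I K) = 0 := by
  simp [Dop]

theorem Mop_comp_Dop_apply_X (γ α β : I) :
    (Mop K γ ∘ₗ Dop K α) (X β : MvPolynomial I K) = if α = β then X γ else 0 := by
  by_cases h : α = β
  · simp [Dop, Mop, h]
  · simp [Dop, Mop, h, pderiv_X_of_ne (Ne.symm h)]

end CCR

section Fock

variable {K : Type*} [Field K] {L : Type*} [LieRing L] [LieAlgebra K L]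
  {W : Type*} [AddCommGroup W] [Module K W] [LieRingModule L W] [LieModule K L W]
  {I : Type*} [Fintype I] (b : Module.Basis I K W) (J : Set I)

noncomputable def normalOrderConst (x : L) : K :=
  ∑ α, if α ∈ J then b.repr ⁅x, b α⁆ α else 0

theorem fock_eq (x : L) :
    fock b J x = (∑ α, ∑ γ, b.repr ⁅x, b α⁆ γ • (Mop K γ ∘ₗ Dop K α)) +
      normalOrderConst b J x • 1 := by
  simp only [fock, Nop_eq, smul_add, Finset.sum_add_distrib, smul_ite, smul_zero,
    normalOrderConst, Finset.sum_smul]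
  congr 1
  refine Finset.sum_congr rfl fun α _ => ?_
  by_cases hα : α ∈ J <;> simp [hα]

theorem fock_apply_one (x : L) :
    fock b J x 1 = normalOrderConst b J x • (1 : MvPolynomial I K) := by
  simp [fock_eq, LinearMap.sum_apply, Mop_comp_Dop_apply_one]

theorem fock_apply_X (x : L) (β : I) :
    fock b J x (X β) = ∑ γ, b.repr ⁅x, b β⁆ γ • X γ + normalOrderConst b J x • X β := by
  simp [fock_eq, LinearMap.sum_apply, Mop_comp_Dop_apply_X]

theorem fock_eq_zero_of_forall_lie_eq_zero {x : L} (hx : ∀ w : W, ⁅x, w⁆ = 0) :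
    fock b J x = 0 := by
  simp [fock, hx]

theorem lie_eq_zero_of_fock_eq_smul_one {x : L} {k : K}
    (h : fock b J x = k • (1 : Module.End K (MvPolynomial I K))) (w : W) : ⁅x, w⁆ = 0 := by
  have hk : normalOrderConst b J x = k := by
    have h1 := LinearMap.congr_fun h 1
    rw [fock_apply_one] at h1
    exact smul_left_injective K one_ne_zero h1
  have hβ (β : I) : ⁅x, b β⁆ = 0 := by
    have hX := LinearMap.congr_fun h (X β)
    rw [fock_apply_X, hk] at hX
    have hsum : ∑ γ, b.repr ⁅x, b β⁆ γ • (X γ : MvPolynomial I K) = 0 := by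
      simpa using hX
    have := Fintype.linearIndependent_iff.mp (linearIndependent_X (R := K) (σ := I)) _ hsum
    exact b.repr.map_eq_zero_iff.mp (Finsupp.ext this)
  have hE : LieModule.toEnd K L W x = 0 := b.ext fun β => by simpa using hβ β
  simpa using LinearMap.congr_fun hE w

end Fock

theorem stmt17_general (K : Type*) [Field K]
    (L : Type*) [LieRing L] [LieAlgebra K L]
    (W : Type*) [AddCommGroup W] [Module K W] [LieRingModule L W] [LieModule K L W]
    (I : Type*) [Fintype I] (b : Module.Basis I K W) (J : Set I) :
    (∀ x : L, (∀ w : W, ⁅x, w⁆ = 0) → x = 0) ↔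
    (∀ (x : L) (k : K),
      fock b J x = k • (1 : Module.End K (MvPolynomial I K)) → x = 0 ∧ k = 0) := by
  constructor
  · intro hW x k h
    have hx : x = 0 := hW x (lie_eq_zero_of_fock_eq_smul_one b J h)
    refine ⟨hx, ?_⟩
    rw [fock_eq_zero_of_forall_lie_eq_zero b J (by simp [hx])] at h
    exact (smul_eq_zero.mp h.symm).resolve_right one_ne_zero
  · intro hF x hx
    exact (hF x 0 (by rw [zero_smul, fock_eq_zero_of_forall_lie_eq_zero b J hx])).1

/-- the `𝔤`-module `W` is faithful if and only if the bosonic Fock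
representation `(x,k) ↦ f_x − k·id_P` is faithful; explicitly: (for all `x ∈ 𝔤`,
if `x·w = 0` for every `w ∈ W` then `x = 0`) holds iff (for all `x ∈ 𝔤` and
`k ∈ K`, if `f_x = k·id_P` then `x = 0` and `k = 0`) holds. -/
theorem stmt17 (K : Type*) [Field K] [CharZero K]
    (L : Type*) [LieRing L] [LieAlgebra K L]
    (W : Type*) [AddCommGroup W] [Module K W] [LieRingModule L W] [LieModule K L W]
    (I : Type*) [Fintype I] (b : Module.Basis I K W) (J : Set I) :
    (∀ x : L, (∀ w : W, ⁅x, w⁆ = 0) → x = 0) ↔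
    (∀ (x : L) (k : K),
      fock b J x = k • (1 : Module.End K (MvPolynomial I K)) → x = 0 ∧ k = 0) :=
  stmt17_general K L W I b J
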